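/- Let A = {a_0, ..., a_k} with 0 = a_0 < a_1 < ... < a_k, gcd(A) = 1, k ≥ 2, and suppose A = A* (i.e., A is symmetric: a ∈ A iff a_k − a ∈ A). Then in the structure theorem for (hA)^{(t)} = C_t ∪ [c_t, h·a_k − d_t] ∪ (h·a_k − D_t) valid for h ≥ h_t = (k−1)(t·a_k−1)·a_k + 1, one has c_t = d_t and C_t = D_t. -/

import Mathlib

open Finset

/-- `r_{A,h}(n)`: the number of multiset representations of `n` as a sum of `h` elements of `A`. -/
def repCount (A : Finset ℤ) (h : ℕ) (n : ℤ) : ℕ :=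
  ((A.sym h).filter (fun m => (Sym.toMultiset m).sum = n)).card

/-- `(hA)^{(t)}`: integers with at least `t` representations. -/
def sumsetT (A : Finset ℤ) (h t : ℕ) : Set ℤ :=
  {n | t ≤ repCount A h n}

/-
Put N = (k - 1)(a_k - 1)² + t a_k. Reducing Bézout coefficients of n modulo a_k writes
n = s + q a_k with s a sum of at most (k - 1)(a_k - 1) elements of A strictly between 0 and a_k.
When N ≤ n ≤ h a_k - N this forces q ≥ t, and trading j copies of a_k for a_1 + (a_k - a_1),
for j < t, gives t distinct representations. Below N the counts r_{A,h}(n) stop depending on h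
once h ≥ N, because a representation of n ≤ h by more than h summands must use 0. Finally
A = A* gives r_{A,h}(h a_k - n) = r_{A,h}(n), so the top of (hA)^(t) mirrors its bottom; c is
where the final run of (hA)^(t) below N starts.
-/

theorem repCount_reflect {A : Finset ℤ} {b : ℤ} (hsym : A.image (b - ·) = A) (h : ℕ) (n : ℤ) :
    repCount A h (h * b - n) = repCount A h n := by
  have hmem : ∀ m : Sym ℤ h, (∀ y ∈ m, y ∈ A) → ∀ y ∈ m.map (b - ·), y ∈ A := by
    intro m hm y hy
    obtain ⟨z, hz, rfl⟩ := Sym.mem_map.1 hy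
    exact hsym ▸ mem_image_of_mem _ (hm z hz)
  have hsum : ∀ m : Sym ℤ h, (m.map (b - ·) : Multiset ℤ).sum = h * b - (m : Multiset ℤ).sum := by
    intro m
    rw [Sym.coe_map, Multiset.sum_map_sub, Multiset.map_const', Multiset.sum_replicate,
      Multiset.map_id', Sym.card_coe, nsmul_eq_mul]
  have hinv : ∀ m : Sym ℤ h, (m.map (b - ·)).map (b - ·) = m := fun m => by
    simp [Sym.map_map]
  refine card_nbij' (·.map (b - ·)) (·.map (b - ·)) ?_ ?_ (fun m _ => hinv m) (fun m _ => hinv m)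
  · intro m hm
    simp only [mem_coe, mem_filter, mem_sym_iff] at hm ⊢
    exact ⟨hmem m hm.1, by rw [hsum, hm.2]; ring⟩
  · intro m hm
    simp only [mem_coe, mem_filter, mem_sym_iff] at hm ⊢
    exact ⟨hmem m hm.1, by rw [hsum, hm.2]⟩

theorem sub_mem_sumsetT {A : Finset ℤ} {b : ℤ} (hsym : A.image (b - ·) = A) {h t : ℕ} {n : ℤ}
    (hn : n ∈ sumsetT A h t) : h * b - n ∈ sumsetT A h t := by
  simpa [sumsetT, repCount_reflect hsym] using hn

theorem repCount_succ {A : Finset ℤ} (h0 : 0 ∈ A) (hA : ∀ y ∈ A, 0 ≤ y) {h : ℕ} {n : ℤ}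
    (hn : n ≤ h) : repCount A (h + 1) n = repCount A h n := by
  symm
  refine card_bij (fun m _ => 0 ::ₛ m) ?_ (fun m _ m' _ hm => (Sym.cons_inj_right 0 m m').1 hm) ?_
  · intro m hm
    simp only [mem_filter, mem_sym_iff, Sym.mem_cons, Sym.coe_cons, Multiset.sum_cons,
      zero_add] at hm ⊢
    exact ⟨fun y hy => hy.elim (· ▸ h0) (hm.1 y), hm.2⟩
  · intro m hm
    simp only [mem_filter, mem_sym_iff] at hm
    have h0m : 0 ∈ m := by
      by_contra h0m
      have hpos : ∀ y ∈ (m : Multiset ℤ), 1 ≤ y := fun y hy =>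
        lt_of_le_of_ne (hA y (hm.1 y hy)) (fun hy0 => h0m (hy0 ▸ hy))
      have := Multiset.card_nsmul_le_sum hpos
      rw [Sym.card_coe, hm.2, nsmul_one] at this
      push_cast at this
      omega
    refine ⟨m.erase 0 h0m, ?_, Sym.cons_erase h0m⟩
    have hsum := congrArg (fun m : Sym ℤ (h + 1) => (m : Multiset ℤ).sum) (Sym.cons_erase h0m)
    simp only [Sym.coe_cons, Multiset.sum_cons, zero_add] at hsum
    simp only [mem_filter, mem_sym_iff]
    refine ⟨fun y hy => hm.1 y (Multiset.mem_of_mem_erase (b := 0) ?_), hsum.trans hm.2⟩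
    rwa [← Sym.mem_coe, Sym.coe_erase] at hy

theorem repCount_eq_of_le {A : Finset ℤ} (h0 : 0 ∈ A) (hA : ∀ y ∈ A, 0 ≤ y) {h h' : ℕ} {n : ℤ}
    (hn : n ≤ h) (hh : h ≤ h') : repCount A h' n = repCount A h n := by
  induction h', hh using Nat.le_induction with
  | base => rfl
  | succ h' hh ih => rw [repCount_succ h0 hA (hn.trans (by exact_mod_cast hh)), ih]

theorem mem_sumsetT_iff_of_le {A : Finset ℤ} (h0 : 0 ∈ A) (hA : ∀ y ∈ A, 0 ≤ y) {h h' t : ℕ}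
    {n : ℤ} (hn : n ≤ h) (hh : h ≤ h') : n ∈ sumsetT A h' t ↔ n ∈ sumsetT A h t := by
  simp only [sumsetT, Set.mem_ofPred_eq, repCount_eq_of_le h0 hA hn hh]

theorem nonneg_of_mem_sumsetT {A : Finset ℤ} (hA : ∀ y ∈ A, 0 ≤ y) {h t : ℕ} (ht : 0 < t)
    {n : ℤ} (hn : n ∈ sumsetT A h t) : 0 ≤ n := by
  obtain ⟨m, hm⟩ := card_pos.1 (ht.trans_le hn)
  simp only [mem_filter, mem_sym_iff] at hm
  exact hm.2 ▸ Multiset.sum_nonneg fun y hy => hA y (hm.1 y hy)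

theorem exists_multiset_dvd_sub_sum {A : Finset ℤ} (hgcd : A.gcd id = 1) {b : ℤ} (hb : 0 < b)
    (n : ℤ) : ∃ S : Multiset ℤ, (∀ y ∈ S, y ∈ A \ {0, b}) ∧ b ∣ n - S.sum ∧
      (Multiset.card S : ℤ) ≤ #(A \ {0, b}) * (b - 1) := by
  obtain ⟨f, hf⟩ := A.gcd_eq_sum_mul id
  rw [hgcd] at hf
  set B := A \ {0, b}
  have hg : ∀ y, (((n * f y % b).toNat : ℕ) : ℤ) = n * f y % b :=
    fun y => Int.toNat_of_nonneg (Int.emod_nonneg _ hb.ne')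
  refine ⟨∑ y ∈ B, Multiset.replicate (n * f y % b).toNat y, ?_, ?_, ?_⟩
  · intro y hy
    obtain ⟨z, hz, hyz⟩ := Multiset.mem_sum.1 hy
    exact Multiset.eq_of_mem_replicate hyz ▸ hz
  · have hsum : (∑ y ∈ B, Multiset.replicate (n * f y % b).toNat y).sum
        = ∑ y ∈ B, (n * f y % b) * y := by
      simp only [Multiset.sum_sum, Multiset.sum_replicate, nsmul_eq_mul, hg]
    have hn : ∑ y ∈ A \ B, n * f y * y + ∑ y ∈ B, n * f y * y = n := by
      conv_rhs => rw [← mul_one n, hf, mul_sum]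
      rw [sum_sdiff sdiff_subset]
      exact sum_congr rfl fun y _ => by simp only [id]; ring
    rw [hsum, show n - ∑ y ∈ B, n * f y % b * y
        = ∑ y ∈ A \ B, n * f y * y + ∑ y ∈ B, (n * f y - n * f y % b) * y by
      simp only [sub_mul, sum_sub_distrib]; linarith]
    refine dvd_add (dvd_sum fun y hy => ?_) (dvd_sum fun y _ => ?_)
    · obtain rfl | rfl : y = 0 ∨ y = b := by
        simp only [B, mem_sdiff, mem_insert, mem_singleton] at hy; tauto
      · simp
      · exact dvd_mul_left _ _
    · rw [Int.emod_def, sub_sub_cancel, mul_assoc]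
      exact dvd_mul_right _ _
  · rw [Multiset.card_sum, Nat.cast_sum]
    simp only [Multiset.card_replicate, hg]
    calc ∑ y ∈ B, n * f y % b ≤ ∑ _y ∈ B, (b - 1) :=
          sum_le_sum fun y _ => Int.le_sub_one_of_lt (Int.emod_lt_of_pos _ hb)
      _ = #B * (b - 1) := by rw [sum_const, nsmul_eq_mul]

theorem le_repCount_of_injective {A : Finset ℤ} {h t : ℕ} {n : ℤ} (M : Fin t → Multiset ℤ)
    (hM : Function.Injective M) (hA : ∀ j, ∀ y ∈ M j, y ∈ A)
    (hcard : ∀ j, Multiset.card (M j) = h) (hsum : ∀ j, (M j).sum = n) :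
    t ≤ repCount A h n := by
  rw [repCount, ← Fintype.card_fin t, ← card_univ]
  exact card_le_card_of_injOn (fun j => Sym.mk (M j) (hcard j))
    (fun j _ => mem_filter.2 ⟨mem_sym_iff.2 (hA j), hsum j⟩)
    (fun i _ j _ hij => hM (congrArg Sym.toMultiset hij))

theorem le_repCount_sum_add_mul {A : Finset ℤ} {S : Multiset ℤ} {b x : ℤ} {q t h : ℕ}
    (hS : ∀ y ∈ S, y ∈ A) (h0 : 0 ∈ A) (hb : b ∈ A) (hx : x ∈ A) (hbx : b - x ∈ A)
    (hx0 : 0 < x) (hxb : x < b) (htq : t ≤ q) (hh : Multiset.card S + q + t ≤ h + 1) :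
    t ≤ repCount A h (S.sum + q * b) := by
  let M : Fin t → Multiset ℤ := fun j =>
    S + Multiset.replicate (q - j) b + Multiset.replicate j x + Multiset.replicate j (b - x)
      + Multiset.replicate (h - (Multiset.card S + q + j)) 0
  have hcount : ∀ j, (M j).count b = S.count b + (q - j) := fun j => by
    simp [M, Multiset.count_replicate, hxb.ne, hx0.ne', (hx0.trans hxb).ne]
  refine le_repCount_of_injective M (fun i j hij => ?_) (fun j y hy => ?_) (fun j => ?_)
    (fun j => ?_)
  · have := congrArg (Multiset.count b) hij
    rw [hcount, hcount] at this
    exact Fin.ext (by omega)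
  · simp only [M, Multiset.mem_add] at hy
    rcases hy with (((hy | hy) | hy) | hy) | hy
    · exact hS y hy
    all_goals rw [Multiset.eq_of_mem_replicate hy]; assumption
  · simp only [M, Multiset.card_add, Multiset.card_replicate]
    omega
  · simp only [M, Multiset.sum_add, Multiset.sum_replicate, nsmul_eq_mul, mul_zero, add_zero,
      Nat.cast_sub (show (j : ℕ) ≤ q by omega)]
    ring

theorem Icc_subset_sumsetT {A : Finset ℤ} (hgcd : A.gcd id = 1) {b x m : ℤ}
    (hAb : ∀ y ∈ A, 0 ≤ y ∧ y ≤ b) (h0 : 0 ∈ A) (hb : b ∈ A) (hx : x ∈ A) (hbx : b - x ∈ A)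
    (hx0 : 0 < x) (hxb : x < b) (hm : (#(A \ {0, b}) : ℤ) ≤ m) (h t : ℕ) :
    Set.Icc (m * (b - 1) ^ 2 + t * b) (h * b - (m * (b - 1) ^ 2 + t * b)) ⊆ sumsetT A h t := by
  rintro n ⟨hn₁, hn₂⟩
  obtain ⟨S, hSA, ⟨q, hq⟩, hcard⟩ := exists_multiset_dvd_sub_sum hgcd (hx0.trans hxb) n
  have hS : ∀ y ∈ S, 1 ≤ y ∧ y ≤ b - 1 := fun y hy => by
    have := hSA y hy
    simp only [mem_sdiff, mem_insert, mem_singleton, not_or] at this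
    have := hAb y this.1
    omega
  have hsum_le : S.sum ≤ Multiset.card S * (b - 1) := by
    simpa using Multiset.sum_le_card_nsmul S _ fun y hy => (hS y hy).2
  have hcard_le : (Multiset.card S : ℤ) ≤ S.sum := by
    simpa using Multiset.card_nsmul_le_sum fun y hy => (hS y hy).1
  have hcard' : Multiset.card S * (b - 1) ≤ m * (b - 1) ^ 2 := by
    rw [sq, ← mul_assoc]
    exact mul_le_mul_of_nonneg_right (hcard.trans (by gcongr; omega)) (by omega)
  have hqt : (t : ℤ) ≤ q := le_of_mul_le_mul_left (by nlinarith) (hx0.trans hxb)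
  have hqh : Multiset.card S + q + t ≤ h := le_of_mul_le_mul_right (by nlinarith) (hx0.trans hxb)
  lift q to ℕ using by omega
  rw [show n = S.sum + q * b by linarith]
  exact le_repCount_sum_add_mul (fun y hy => (mem_sdiff.1 (hSA y hy)).1) h0 hb hx hbx hx0 hxb
    (by exact_mod_cast hqt) (by omega)

theorem exists_Icc_subset_sub_one_notMem {S : Set ℤ} (hS : ∀ n ∈ S, 0 ≤ n) {N : ℤ}
    (hN : 0 ≤ N) : ∃ c, 0 ≤ c ∧ c ≤ N + 1 ∧ Set.Icc c N ⊆ S ∧ c - 1 ∉ S := by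
  obtain ⟨c, ⟨hc0, hcS⟩, hmin⟩ := Int.exists_least_of_bdd (P := fun c => 0 ≤ c ∧ Set.Icc c N ⊆ S)
    ⟨0, fun _ h => h.1⟩ ⟨N + 1, by omega, fun n hn => absurd hn.2 (by linarith [hn.1])⟩
  refine ⟨c, hc0, hmin _ ⟨by omega, fun n hn => absurd hn.2 (by linarith [hn.1])⟩, hcS, ?_⟩
  intro hc
  have hc1 : 0 ≤ c - 1 := hS _ hc
  have := hmin (c - 1) ⟨hc1, fun n hn => ?_⟩
  · omega
  · rcases eq_or_lt_of_le hn.1 with rfl | hlt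
    · exact hc
    · exact hcS ⟨by omega, hn.2⟩

theorem eq_union_Icc_union_image_of_symmetric {S : Set ℤ} {L N c : ℤ}
    (hsymm : ∀ n ∈ S, L - n ∈ S) (hmid : Set.Icc N (L - N) ⊆ S)
    (hrun : Set.Icc c N ⊆ S) (hgap : c - 1 ∉ S) :
    S = {n ∈ S | n ≤ c - 2} ∪ Set.Icc c (L - c) ∪ (L - ·) '' {n ∈ S | n ≤ c - 2} := by
  have hgap' : ∀ n ∈ S, n ≤ c - 1 → n ≤ c - 2 := fun n hn hle => by
    have : n ≠ c - 1 := fun h => hgap (h ▸ hn)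
    omega
  ext n
  simp only [Set.mem_union, Set.mem_ofPred_eq, Set.mem_Icc, Set.mem_image]
  constructor
  · intro hn
    by_cases hlow : n ≤ c - 1
    · exact .inl (.inl ⟨hn, hgap' n hn hlow⟩)
    by_cases hhigh : L - n ≤ c - 1
    · exact .inr ⟨L - n, ⟨hsymm n hn, hgap' _ (hsymm n hn) hhigh⟩, by ring⟩
    · exact .inl (.inr ⟨by omega, by omega⟩)
  · rintro ((⟨hn, -⟩ | ⟨hcn, hnc⟩) | ⟨m, ⟨hm, -⟩, rfl⟩)
    · exact hn
    · by_cases hnN : n ≤ N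
      · exact hrun ⟨hcn, hnN⟩
      by_cases hLN : L - N ≤ n
      · simpa using hsymm _ (hrun ⟨by omega, by omega⟩ : L - n ∈ S)
      · exact hmid ⟨by omega, by omega⟩
    · exact hsymm m hm

theorem exists_sumsetT_eq_union {A : Finset ℤ} (hgcd : A.gcd id = 1) {b x m : ℤ}
    (hAb : ∀ y ∈ A, 0 ≤ y ∧ y ≤ b) (h0 : 0 ∈ A) (hx : x ∈ A) (hx0 : 0 < x) (hxb : x < b)
    (hsym : A.image (b - ·) = A) (hm : (#(A \ {0, b}) : ℤ) ≤ m) {t : ℕ} (ht : 0 < t)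
    {h₀ : ℕ} (hh₀ : m * (b - 1) ^ 2 + t * b ≤ h₀) :
    ∃ c : ℤ, 0 ≤ c ∧ ∃ C : Finset ℤ, ↑C ⊆ Set.Icc 0 (c - 2) ∧ ∀ h : ℕ, h₀ ≤ h →
      sumsetT A h t = ↑C ∪ Set.Icc c (h * b - c) ∪ (h * b - ·) '' ↑C := by
  have hsub : ∀ y ∈ A, b - y ∈ A := fun y hy => hsym ▸ mem_image_of_mem _ hy
  have hA : ∀ y ∈ A, 0 ≤ y := fun y hy => (hAb y hy).1
  have hnonneg : ∀ h : ℕ, ∀ n ∈ sumsetT A h t, 0 ≤ n := fun h n => nonneg_of_mem_sumsetT hA ht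
  set N := m * (b - 1) ^ 2 + t * b
  have hN : 0 ≤ N :=
    add_nonneg (mul_nonneg ((Nat.cast_nonneg _).trans hm) (sq_nonneg _)) (by nlinarith)
  have hstable : ∀ h : ℕ, h₀ ≤ h → ∀ n ≤ N, (n ∈ sumsetT A h t ↔ n ∈ sumsetT A h₀ t) :=
    fun h hh n hn => mem_sumsetT_iff_of_le h0 hA (hn.trans hh₀) hh
  obtain ⟨c, hc0, hcN, hrun, hgap⟩ := exists_Icc_subset_sub_one_notMem (hnonneg h₀) hN
  refine ⟨c, hc0, (Icc 0 (c - 2)).filter (t ≤ repCount A h₀ ·), fun n hn => ?_, fun h hh => ?_⟩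
  · simp only [coe_filter, mem_Icc, Set.mem_ofPred_eq] at hn
    exact hn.1
  have hC : ↑((Icc 0 (c - 2)).filter (t ≤ repCount A h₀ ·)) = {n ∈ sumsetT A h t | n ≤ c - 2} := by
    ext n
    simp only [coe_filter, mem_Icc, Set.mem_ofPred_eq]
    exact ⟨fun ⟨⟨_, hle⟩, hn⟩ => ⟨(hstable h hh n (by omega)).2 hn, hle⟩,
      fun ⟨hn, hle⟩ => ⟨⟨hnonneg h n hn, hle⟩, (hstable h hh n (by omega)).1 hn⟩⟩
  rw [hC]
  exact eq_union_Icc_union_image_of_symmetric (fun n => sub_mem_sumsetT hsym)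
    (Icc_subset_sumsetT hgcd hAb h0 (by simpa using hsub 0 h0) hx (hsub x hx) hx0 hxb hm h t)
    (fun n hn => (hstable h hh n hn.2).2 (hrun hn))
    (fun hc => hgap ((hstable h hh _ (by omega)).1 hc))

theorem mem_Icc_of_mem_image_range {k : ℕ} {a : ℕ → ℤ} (ha : MonotoneOn a (Set.Iic k)) {y : ℤ}
    (hy : y ∈ (range (k + 1)).image a) : a 0 ≤ y ∧ y ≤ a k := by
  obtain ⟨i, hi, rfl⟩ := mem_image.1 hy
  have hik : i ≤ k := Nat.lt_succ_iff.1 (mem_range.1 hi)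
  exact ⟨ha (Set.mem_Iic.2 (Nat.zero_le k)) hik (Nat.zero_le i), ha hik Set.self_mem_Iic hik⟩

theorem card_image_range_sdiff_le {k : ℕ} {a : ℕ → ℤ} (ha0 : a 0 = 0) :
    #((range (k + 1)).image a \ {0, a k}) ≤ k - 1 := by
  calc #((range (k + 1)).image a \ {0, a k}) ≤ #((Ioo 0 k).image a) := by
        refine card_le_card fun y hy => ?_
        simp only [mem_sdiff, mem_image, mem_range, mem_insert, mem_singleton, not_or] at hy
        obtain ⟨⟨i, hi, rfl⟩, hi0, hik⟩ := hy
        exact mem_image_of_mem a (mem_Ioo.2 ⟨Nat.pos_of_ne_zero fun h => hi0 (h ▸ ha0),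
          lt_of_le_of_ne (by omega) fun h => hik (h ▸ rfl)⟩)
    _ ≤ k - 1 := card_image_le.trans (by simp)

theorem stmt13 (k : ℕ) (hk : 2 ≤ k) (a : ℕ → ℤ)
    (ha0 : a 0 = 0) (hmono : ∀ i j, i ≤ k → j ≤ k → i < j → a i < a j)
    (A : Finset ℤ) (hA : A = (Finset.range (k + 1)).image a)
    (hgcd : A.gcd id = 1)
    (hsym : A.image (fun x => a k - x) = A)
    (t : ℕ) (ht : 0 < t)
    (h_t : ℕ) (hh_t : (h_t : ℤ) = ((k : ℤ) - 1) * ((t : ℤ) * a k - 1) * a k + 1) :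
    ∃ c : ℤ, 0 ≤ c ∧ ∃ C : Finset ℤ,
      ↑C ⊆ Set.Icc (0 : ℤ) (c - 2) ∧
      ∀ h : ℕ, h_t ≤ h →
        sumsetT A h t =
          ↑C ∪ Set.Icc c ((h : ℤ) * a k - c) ∪ ((fun x => (h : ℤ) * a k - x) '' ↑C) := by
  have hmono' : StrictMonoOn a (Set.Iic k) := fun i hi j hj hij => hmono i j hi hj hij
  have hAb : ∀ y ∈ A, 0 ≤ y ∧ y ≤ a k := fun y hy =>
    ha0 ▸ mem_Icc_of_mem_image_range hmono'.monotoneOn (hA ▸ hy)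
  have ha1 : 0 < a 1 := ha0 ▸ hmono 0 1 (by omega) (by omega) one_pos
  have ha1k : a 1 < a k := hmono 1 k (by omega) le_rfl (by omega)
  have hcard : (#(A \ {0, a k}) : ℤ) ≤ k - 1 := by
    have := hA ▸ card_image_range_sdiff_le (k := k) ha0
    omega
  have hh_t' : ((k : ℤ) - 1) * (a k - 1) ^ 2 + t * a k ≤ h_t := by
    -- the difference of the two sides is (k - 2) X + (t - 1) a_k (a_k - 1), with X below
    have hX : 0 ≤ ((t : ℤ) - 1) * a k ^ 2 + a k - 1 := by nlinarith
    rw [hh_t]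
    have hak : 0 ≤ a k * (a k - 1) := mul_nonneg (by omega) (by omega)
    nlinarith [mul_nonneg (show (0 : ℤ) ≤ k - 2 by omega) hX,
      mul_nonneg (show (0 : ℤ) ≤ t - 1 by omega) hak]
  have hmem : ∀ i ≤ k, a i ∈ A := fun i hi => hA ▸ mem_image_of_mem a (mem_range.2 (by omega))
  exact exists_sumsetT_eq_union hgcd hAb (ha0 ▸ hmem 0 (Nat.zero_le k)) (hmem 1 (by omega)) ha1
    ha1k hsym hcard ht hh_t'
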